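/- arXiv:0907.2508 — 4 statements merged into one kernel-verified Lean document; each statement's English description precedes it below -/
import Mathlib

section
/- Let (F,‖·‖) be a normed real vector space, (Ω,𝓕,P) a probability space, and let Jⁿ (n∈ℕ) and J be linear maps from F into the space of real-valued random variables on Ω. Assume there is a constant C>0 such that for all f∈F, sup_{n≥1} E|Jⁿ(f)| ≤ C‖f‖ and E|J(f)| ≤ C‖f‖, and assume that for some dense subspace D of F, Jⁿ(f) converges in distribution to J(f) as n→∞ for every f∈D. Then Jⁿ(f) converges in distribution to J(f) for every f∈F. -/
/-! By Markov's inequality, `E d(X, Y) ≤ δ²` gives `P(d(X, Y) ≥ ε) ≤ ε` for every `ε > δ`, hence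
Lévy–Prokhorov distance at most `δ` between the laws of `X` and `Y`. Applied to
`Jⁿ f - Jⁿ g = Jⁿ (f - g)`, the `L¹` bound makes `f ↦ law (Jⁿ f)` uniformly `½`-Hölder into the
Lévy–Prokhorov metric space, which metrizes convergence in distribution. So the family is
equicontinuous, `f ↦ law (J f)` is continuous, and the set of `f` where the laws converge is closed;
it contains the dense subspace `D`. -/

open MeasureTheory Filter Topology ENNReal TopologicalSpace BoundedContinuousFunction

theorem Equicontinuous.tendsto_of_dense {ι X α : Type*} [TopologicalSpace X] [UniformSpace α]
    {l : Filter ι} {F : ι → X → α} {f : X → α} {s : Set X} (hF : Equicontinuous F)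
    (hf : Continuous f) (hs : Dense s) (h : ∀ x ∈ s, Tendsto (F · x) l (𝓝 (f x))) (x : X) :
    Tendsto (F · x) l (𝓝 (f x)) :=
  (hF.isClosed_setOfPred_tendsto hf).closure_subset_iff.2 h (hs x)

section LevyProkhorov

variable {Ω E : Type*} [MeasurableSpace Ω] [MeasurableSpace E]

lemma levyProkhorovEDist_map_le_of_lintegral_edist_le [PseudoEMetricSpace E]
    [OpensMeasurableSpace E] [SecondCountableTopology E] (P : Measure Ω) [IsProbabilityMeasure P]
    {X Y : Ω → E} (hX : AEMeasurable X P) (hY : AEMeasurable Y P) {δ : ℝ≥0∞}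
    (h : ∫⁻ ω, edist (X ω) (Y ω) ∂P ≤ δ ^ 2) :
    levyProkhorovEDist (P.map X) (P.map Y) ≤ δ := by
  have := Measure.isProbabilityMeasure_map (μ := P) hX
  have := Measure.isProbabilityMeasure_map (μ := P) hY
  refine levyProkhorovEDist_le_of_forall_le _ _ δ fun ε B hδε hε hB => ?_
  have hε0 : ε ≠ 0 := (zero_le.trans_lt hδε).ne'
  rw [Measure.map_apply_of_aemeasurable hX hB,
    Measure.map_apply_of_aemeasurable hY Metric.isOpen_thickening.measurableSet]
  have hsub : X ⁻¹' B ⊆ Y ⁻¹' Metric.thickening ε.toReal B ∪ {ω | ε ≤ edist (X ω) (Y ω)} := by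
    intro ω hω
    refine (lt_or_ge (edist (X ω) (Y ω)) ε).imp (fun hlt => ?_) id
    rw [Set.mem_preimage, Metric.mem_thickening_iff_infEDist_lt, ofReal_toReal hε.ne,
      edist_comm] at *
    exact (Metric.infEDist_le_edist_of_mem hω).trans_lt hlt
  have hmarkov : ε * P {ω | ε ≤ edist (X ω) (Y ω)} ≤ ε * ε :=
    calc ε * P {ω | ε ≤ edist (X ω) (Y ω)} ≤ ∫⁻ ω, edist (X ω) (Y ω) ∂P :=
          mul_meas_ge_le_lintegral₀ (hX.edist hY) ε
      _ ≤ ε * ε := by rw [← sq]; exact h.trans (by gcongr)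
  calc P (X ⁻¹' B)
      ≤ P (Y ⁻¹' Metric.thickening ε.toReal B) + P {ω | ε ≤ edist (X ω) (Y ω)} :=
        (measure_mono hsub).trans (measure_union_le _ _)
    _ ≤ P (Y ⁻¹' Metric.thickening ε.toReal B) + ε := by
        gcongr
        exact (ENNReal.mul_le_mul_iff_right hε0 hε.ne).mp hmarkov

variable [PseudoMetricSpace E] [OpensMeasurableSpace E] [SeparableSpace E]
  (P : Measure Ω) [IsProbabilityMeasure P]

noncomputable def levyProkhorovLaw {X : Ω → E} (hX : AEMeasurable X P) :
    LevyProkhorov (ProbabilityMeasure E) :=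
  LevyProkhorov.probabilityMeasureHomeomorph ⟨P.map X, Measure.isProbabilityMeasure_map hX⟩

lemma dist_levyProkhorovLaw_le_sqrt {X Y : Ω → E} (hX : AEMeasurable X P)
    (hY : AEMeasurable Y P) {a : ℝ} (h : ∫⁻ ω, edist (X ω) (Y ω) ∂P ≤ ENNReal.ofReal a) :
    dist (levyProkhorovLaw P hX) (levyProkhorovLaw P hY) ≤ √a := by
  refine ENNReal.toReal_le_of_le_ofReal (Real.sqrt_nonneg a)
    (levyProkhorovEDist_map_le_of_lintegral_edist_le P hX hY (h.trans ?_))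
  rw [← ENNReal.ofReal_pow (Real.sqrt_nonneg a), Real.sq_sqrt']
  exact ENNReal.ofReal_le_ofReal (le_max_left a 0)

lemma tendsto_levyProkhorovLaw_iff {ι : Type*} {l : Filter ι} {X : ι → Ω → E} {Z : Ω → E}
    (hX : ∀ i, AEMeasurable (X i) P) (hZ : AEMeasurable Z P) :
    Tendsto (fun i => levyProkhorovLaw P (hX i)) l (𝓝 (levyProkhorovLaw P hZ)) ↔
      ∀ φ : E →ᵇ ℝ, Tendsto (fun i => ∫ ω, φ (X i ω) ∂P) l (𝓝 (∫ ω, φ (Z ω) ∂P)) := by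
  refine LevyProkhorov.probabilityMeasureHomeomorph.isInducing.tendsto_nhds_iff.symm.trans <|
    ProbabilityMeasure.tendsto_iff_forall_integral_tendsto.trans ?_
  refine forall_congr' fun φ => ?_
  simp only [ProbabilityMeasure.coe_mk,
    integral_map (hX _) φ.continuous.aestronglyMeasurable,
    integral_map hZ φ.continuous.aestronglyMeasurable]

lemma equicontinuous_levyProkhorovLaw_of_lintegral_abs_le {ι F : Type*}
    [SeminormedAddCommGroup F] [Module ℝ F] (T : ι → F →ₗ[ℝ] Ω → ℝ)
    (hT : ∀ i f, AEMeasurable (T i f) P) (C : ℝ)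
    (hC : ∀ i f, ∫⁻ ω, ENNReal.ofReal |T i f ω| ∂P ≤ ENNReal.ofReal (C * ‖f‖)) :
    Equicontinuous fun i f => levyProkhorovLaw P (hT i f) := by
  have hmod : Tendsto (fun r => √(C * r)) (𝓝 0) (𝓝 0) := by
    simpa using ((continuous_const.mul continuous_id).sqrt).tendsto (0 : ℝ)
  refine Metric.equicontinuous_of_continuity_modulus _ hmod _ fun f g i =>
    dist_levyProkhorovLaw_le_sqrt P _ _ ?_
  have hsub : ∀ ω, edist (T i f ω) (T i g ω) = ENNReal.ofReal |T i (f - g) ω| := fun ω => by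
    rw [map_sub, Pi.sub_apply, edist_dist, Real.dist_eq]
  simpa only [hsub, dist_eq_norm] using hC i (f - g)

end LevyProkhorov

theorem weak_convergence_dense_subspace_general
    {F : Type*} [NormedAddCommGroup F] [NormedSpace ℝ F]
    {Ω : Type*} [MeasurableSpace Ω] (P : Measure Ω) [IsProbabilityMeasure P]
    (J : ℕ → F →ₗ[ℝ] Ω → ℝ) (Jlim : F →ₗ[ℝ] Ω → ℝ)
    (hJmeas : ∀ n f, AEMeasurable (J n f) P) (hJlimMeas : ∀ f, AEMeasurable (Jlim f) P)
    (C : ℝ)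
    (hJbound : ∀ (n : ℕ) (f : F),
      ∫⁻ ω, ENNReal.ofReal |J n f ω| ∂P ≤ ENNReal.ofReal (C * ‖f‖))
    (hJlimBound : ∀ f : F,
      ∫⁻ ω, ENNReal.ofReal |Jlim f ω| ∂P ≤ ENNReal.ofReal (C * ‖f‖))
    (D : Subspace ℝ F) (hD : Dense (D : Set F))
    (hconv : ∀ f ∈ D, ∀ φ : BoundedContinuousFunction ℝ ℝ,
      Tendsto (fun n => ∫ ω, φ (J n f ω) ∂P) atTop (𝓝 (∫ ω, φ (Jlim f ω) ∂P))) :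
    ∀ f : F, ∀ φ : BoundedContinuousFunction ℝ ℝ,
      Tendsto (fun n => ∫ ω, φ (J n f ω) ∂P) atTop (𝓝 (∫ ω, φ (Jlim f ω) ∂P)) := by
  have hJ_equicont := equicontinuous_levyProkhorovLaw_of_lintegral_abs_le P J hJmeas C hJbound
  have hJlim_cont : Continuous fun f => levyProkhorovLaw P (hJlimMeas f) :=
    (equicontinuous_levyProkhorovLaw_of_lintegral_abs_le P (fun _ : Unit => Jlim)
      (fun _ => hJlimMeas) C fun _ => hJlimBound).continuous ()
  have hlaw := hJ_equicont.tendsto_of_dense hJlim_cont hD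
    fun f hf => (tendsto_levyProkhorovLaw_iff P _ _).2 (hconv f hf)
  exact fun f => (tendsto_levyProkhorovLaw_iff P _ _).1 (hlaw f)

/-- Let `F` be a normed real vector space, `(Ω, 𝓕, P)` a probability space, and
`Jⁿ` (`n ∈ ℕ`) and `J` linear maps from `F` into real random variables on `Ω`.
If `sup_n E|Jⁿ(f)| ≤ C‖f‖` and `E|J(f)| ≤ C‖f‖` for all `f ∈ F`, and `Jⁿ(f)`
converges in distribution to `J(f)` for all `f` in a dense subspace `D ⊆ F`,
then `Jⁿ(f)` converges in distribution to `J(f)` for every `f ∈ F`.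
Convergence in distribution is expressed by convergence of expectations of
bounded continuous functions. -/
theorem weak_convergence_dense_subspace
    {F : Type*} [NormedAddCommGroup F] [NormedSpace ℝ F]
    {Ω : Type*} [MeasurableSpace Ω] (P : Measure Ω) [IsProbabilityMeasure P]
    (J : ℕ → F →ₗ[ℝ] Ω → ℝ) (Jlim : F →ₗ[ℝ] Ω → ℝ)
    (hJmeas : ∀ n f, AEMeasurable (J n f) P) (hJlimMeas : ∀ f, AEMeasurable (Jlim f) P)
    (C : ℝ) (hC : 0 < C)
    (hJbound : ∀ (n : ℕ) (f : F),
      ∫⁻ ω, ENNReal.ofReal |J n f ω| ∂P ≤ ENNReal.ofReal (C * ‖f‖))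
    (hJlimBound : ∀ f : F,
      ∫⁻ ω, ENNReal.ofReal |Jlim f ω| ∂P ≤ ENNReal.ofReal (C * ‖f‖))
    (D : Subspace ℝ F) (hD : Dense (D : Set F))
    (hconv : ∀ f ∈ D, ∀ φ : BoundedContinuousFunction ℝ ℝ,
      Tendsto (fun n => ∫ ω, φ (J n f ω) ∂P) atTop (𝓝 (∫ ω, φ (Jlim f ω) ∂P))) :
    ∀ f : F, ∀ φ : BoundedContinuousFunction ℝ ℝ,
      Tendsto (fun n => ∫ ω, φ (J n f ω) ∂P) atTop (𝓝 (∫ ω, φ (Jlim f ω) ∂P)) :=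
  weak_convergence_dense_subspace_general P J Jlim hJmeas hJlimMeas C hJbound hJlimBound D hD hconv
end

section
/- Let N be a standard Poisson process on the plane. Then for all 0≤s≤t and all x,y≥0, E[(−1)^{N(s,y)+N(t,x)}] = exp(−2[(t−s)x + |x−y|·s]). -/
open MeasureTheory ProbabilityTheory

/-- The rectangular increment of a plane process over `(s,t] × (y,x]`, as an integer. -/
def planeInc (N : ℝ → ℝ → ℕ) (s t y x : ℝ) : ℤ :=
  (N t x : ℤ) - (N s x : ℤ) - (N t y : ℤ) + (N s y : ℤ)

/-- `N` is a standard Poisson process on the plane: it vanishes on the axes, its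
increments over rectangles `(s,t] × (y,x]` are Poisson distributed with parameter
`(t−s)(x−y)`, and increments over pairwise disjoint rectangles are mutually
independent. -/
structure IsStdPlanePoisson {Ω : Type*} [MeasurableSpace Ω] (P : Measure Ω)
    (N : Ω → ℝ → ℝ → ℕ) : Prop where
  zero_left : ∀ ω x, N ω 0 x = 0
  zero_right : ∀ ω t, N ω t 0 = 0
  measurable : ∀ t x, Measurable fun ω => N ω t x
  poisson_law : ∀ s t y x : ℝ, 0 ≤ s → s < t → 0 ≤ y → y < x → ∀ k : ℕ,
    P {ω | planeInc (N ω) s t y x = (k : ℤ)} =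
      ENNReal.ofReal (Real.exp (-((t - s) * (x - y))) * ((t - s) * (x - y)) ^ k /
        (Nat.factorial k))
  indep : ∀ (M : ℕ) (s t y x : Fin M → ℝ), (∀ i, 0 ≤ s i) → (∀ i, s i < t i) →
    (∀ i, 0 ≤ y i) → (∀ i, y i < x i) →
    (Set.univ : Set (Fin M)).Pairwise (fun i j => Disjoint
      (Set.Ioc (s i) (t i) ×ˢ Set.Ioc (y i) (x i))
      (Set.Ioc (s j) (t j) ×ˢ Set.Ioc (y j) (x j))) →
    iIndepFun (m := fun _ => inferInstance)
      (fun i ω => planeInc (N ω) (s i) (t i) (y i) (x i)) P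

/-- The Kac–Stroock processes `θ_n(t,x) = n √(tx) (−1)^{N(√n t, √n x)}`. -/
noncomputable def kacStroock {Ω : Type*} (N : Ω → ℝ → ℝ → ℕ) (n : ℕ) (ω : Ω) (t x : ℝ) : ℝ :=
  (n : ℝ) * Real.sqrt (t * x) * (-1 : ℝ) ^ (N ω (Real.sqrt n * t) (Real.sqrt n * x))

/-!
Writing `N(A)` for the number of points in a rectangle `A`, and `a = min x y`, `b = max x y`,
`N(s,y) + N(t,x) ≡ N((s,t] × (0,x]) + N((0,s] × (a,b]) (mod 2)`. The two rectangles are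
disjoint, so these are independent Poisson variables with parameters `(t-s)x` and `s|x-y|`,
and `E[(-1)^Z] = exp(-2λ)` for `Z` Poisson with parameter `λ`.
-/

open Set
open scoped NNReal Nat

lemma MeasureTheory.Measure.le_of_forall_singleton_le {α : Type*} [MeasurableSpace α]
    [Countable α] [MeasurableSingletonClass α] {μ ν : Measure α} (h : ∀ a, μ {a} ≤ ν {a}) :
    μ ≤ ν := by
  rw [← μ.sum_smul_dirac, ← ν.sum_smul_dirac, Measure.le_iff]
  intro s hs
  simp only [Measure.sum_apply _ hs, Measure.smul_apply, smul_eq_mul]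
  exact ENNReal.tsum_le_tsum fun a => mul_le_mul_left (h a) _

namespace ProbabilityTheory

lemma hasLaw_map_cast_poissonMeasure {Ω : Type*} [MeasurableSpace Ω] {P : Measure Ω}
    [IsProbabilityMeasure P] {Z : Ω → ℤ} (hZ : Measurable Z) {r : ℝ≥0}
    (h : ∀ n : ℕ, P {ω | Z ω = n} = Po(r) {n}) : HasLaw Z Po(ℤ, r) P := by
  -- Domination on singletons between probability measures already forces equality, so the
  -- negative integers need no separate argument.
  have := Measure.isProbabilityMeasure_map (μ := P) hZ.aemeasurable
  refine ⟨hZ.aemeasurable, (Measure.eq_of_le_of_isProbabilityMeasure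
    (Measure.le_of_forall_singleton_le fun k => ?_)).symm⟩
  rw [Measure.map_apply .of_discrete (measurableSet_singleton k),
    Measure.map_apply hZ (measurableSet_singleton k)]
  by_cases hk : ∃ n : ℕ, (n : ℤ) = k
  · obtain ⟨n, rfl⟩ := hk
    rw [show (Nat.cast ⁻¹' {(n : ℤ)} : Set ℕ) = {n} by ext; simp]
    exact (h n).ge
  · simp [Set.preimage_singleton_eq_empty.2 (by simpa using hk)]

lemma integral_neg_one_zpow_map_cast_poissonMeasure (r : ℝ≥0) :
    ∫ k, (-1 : ℝ) ^ k ∂Po(ℤ, r) = Real.exp (-2 * r) := by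
  rw [integral_map_cast_poissonMeasure]
  calc ∑' n : ℕ, (Real.exp (-r) * r ^ n / n !) • (-1 : ℝ) ^ (n : ℤ)
      = Real.exp (-r) * ∑' n : ℕ, (-r : ℝ) ^ n / n ! := by
        rw [← tsum_mul_left]
        congr with n
        rw [smul_eq_mul, zpow_natCast, neg_pow]
        ring
    _ = Real.exp (-r) * Real.exp (-r) := by rw [Real.exp_eq_exp_ℝ, NormedSpace.exp_eq_tsum_div]
    _ = Real.exp (-2 * r) := by rw [← Real.exp_add]; ring_nf

end ProbabilityTheory

@[simp]
lemma planeInc_self_left (f : ℝ → ℝ → ℕ) (s y x : ℝ) : planeInc f s s y x = 0 := by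
  simp [planeInc]

@[simp]
lemma planeInc_self_right (f : ℝ → ℝ → ℕ) (s t y : ℝ) : planeInc f s t y y = 0 := by
  simp [planeInc]

lemma natCast_add_eq_planeInc_add_planeInc {f : ℝ → ℝ → ℕ} (hf₀ : ∀ x, f 0 x = 0)
    (hf₀' : ∀ t, f t 0 = 0) (s t x y : ℝ) :
    ((f s y + f t x : ℕ) : ℤ) =
      planeInc f s t 0 x + planeInc f 0 s (min x y) (max x y) + 2 * f s (min x y) := by
  rcases le_total x y with h | h <;>
    simp [planeInc, h, hf₀, hf₀'] <;> ring

namespace IsStdPlanePoisson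

variable {Ω : Type*} [MeasurableSpace Ω] {P : Measure Ω} {N : Ω → ℝ → ℝ → ℕ}
  {s t y x : ℝ}

lemma measurable_planeInc (hN : IsStdPlanePoisson P N) (s t y x : ℝ) :
    Measurable fun ω => planeInc (N ω) s t y x := by
  have h := hN.measurable
  unfold planeInc
  fun_prop

lemma measure_planeInc_eq (hN : IsStdPlanePoisson P N) [IsProbabilityMeasure P] (hs : 0 ≤ s)
    (hst : s ≤ t) (hy : 0 ≤ y) (hyx : y ≤ x) (n : ℕ) :
    P {ω | planeInc (N ω) s t y x = n} = Po(((t - s) * (x - y)).toNNReal) {n} := by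
  rw [poissonMeasure_singleton, Real.coe_toNNReal _ (by nlinarith)]
  rcases hst.eq_or_lt with rfl | hst
  · cases n <;> simp [eq_comm (a := (0 : ℤ)), Nat.cast_add_one_ne_zero]
  rcases hyx.eq_or_lt with rfl | hyx
  · cases n <;> simp [eq_comm (a := (0 : ℤ)), Nat.cast_add_one_ne_zero]
  exact hN.poisson_law s t y x hs hst hy hyx n

lemma hasLaw_planeInc (hN : IsStdPlanePoisson P N) [IsProbabilityMeasure P] (hs : 0 ≤ s)
    (hst : s ≤ t) (hy : 0 ≤ y) (hyx : y ≤ x) :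
    HasLaw (fun ω => planeInc (N ω) s t y x) Po(ℤ, ((t - s) * (x - y)).toNNReal) P :=
  hasLaw_map_cast_poissonMeasure (hN.measurable_planeInc s t y x)
    (hN.measure_planeInc_eq hs hst hy hyx)

lemma integral_neg_one_zpow_planeInc (hN : IsStdPlanePoisson P N) [IsProbabilityMeasure P]
    (hs : 0 ≤ s) (hst : s ≤ t) (hy : 0 ≤ y) (hyx : y ≤ x) :
    ∫ ω, (-1 : ℝ) ^ planeInc (N ω) s t y x ∂P = Real.exp (-2 * ((t - s) * (x - y))) := by
  calc ∫ ω, (-1 : ℝ) ^ planeInc (N ω) s t y x ∂P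
      = ∫ k, (-1 : ℝ) ^ k ∂Po(ℤ, ((t - s) * (x - y)).toNNReal) :=
        (hN.hasLaw_planeInc hs hst hy hyx).integral_comp .of_discrete
    _ = Real.exp (-2 * ((t - s) * (x - y))) := by
        rw [integral_neg_one_zpow_map_cast_poissonMeasure, Real.coe_toNNReal _ (by nlinarith)]

lemma indepFun_planeInc (hN : IsStdPlanePoisson P N) [IsProbabilityMeasure P]
    {s' t' y' x' : ℝ} (hs : 0 ≤ s) (hst : s ≤ t) (hy : 0 ≤ y) (hyx : y ≤ x)
    (hs' : 0 ≤ s') (hst' : s' ≤ t') (hy' : 0 ≤ y') (hyx' : y' ≤ x')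
    (hdisj : Disjoint (Ioc s t ×ˢ Ioc y x) (Ioc s' t' ×ˢ Ioc y' x')) :
    IndepFun (fun ω => planeInc (N ω) s t y x) (fun ω => planeInc (N ω) s' t' y' x') P := by
  rcases hst.eq_or_lt with rfl | hst
  · simpa using indepFun_const_left (0 : ℤ) _
  rcases hyx.eq_or_lt with rfl | hyx
  · simpa using indepFun_const_left (0 : ℤ) _
  rcases hst'.eq_or_lt with rfl | hst'
  · simpa using indepFun_const_right _ (0 : ℤ)
  rcases hyx'.eq_or_lt with rfl | hyx'
  · simpa using indepFun_const_right _ (0 : ℤ)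
  have hind := hN.indep 2 ![s, s'] ![t, t'] ![y, y'] ![x, x']
    (by simp [Fin.forall_fin_two, hs, hs']) (by simp [Fin.forall_fin_two, hst, hst'])
    (by simp [Fin.forall_fin_two, hy, hy']) (by simp [Fin.forall_fin_two, hyx, hyx'])
    (by
      intro i _ j _ hij
      fin_cases i <;> fin_cases j <;> simp_all [hdisj.symm])
  simpa using hind.indepFun (show (0 : Fin 2) ≠ 1 by decide)

lemma integral_neg_one_zpow_planeInc_mul (hN : IsStdPlanePoisson P N) [IsProbabilityMeasure P]
    {s' t' y' x' : ℝ} (hs : 0 ≤ s) (hst : s ≤ t) (hy : 0 ≤ y) (hyx : y ≤ x)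
    (hs' : 0 ≤ s') (hst' : s' ≤ t') (hy' : 0 ≤ y') (hyx' : y' ≤ x')
    (hdisj : Disjoint (Ioc s t ×ˢ Ioc y x) (Ioc s' t' ×ˢ Ioc y' x')) :
    ∫ ω, (-1 : ℝ) ^ planeInc (N ω) s t y x * (-1 : ℝ) ^ planeInc (N ω) s' t' y' x' ∂P =
      Real.exp (-2 * ((t - s) * (x - y))) * Real.exp (-2 * ((t' - s') * (x' - y'))) := by
  rw [← hN.integral_neg_one_zpow_planeInc hs hst hy hyx,
    ← hN.integral_neg_one_zpow_planeInc hs' hst' hy' hyx']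
  exact ((hN.indepFun_planeInc hs hst hy hyx hs' hst' hy' hyx' hdisj).comp
    (measurable_of_countable _) (measurable_of_countable _)).integral_mul_eq_mul_integral
    ((measurable_of_countable _).comp (hN.measurable_planeInc s t y x)).aestronglyMeasurable
    ((measurable_of_countable _).comp (hN.measurable_planeInc s' t' y' x')).aestronglyMeasurable

end IsStdPlanePoisson

/-- For a standard Poisson process `N` on the plane, for all `0 ≤ s ≤ t` and `x, y ≥ 0`,
`E[(−1)^{N(s,y)+N(t,x)}] = exp(−2[(t−s)x + |x−y| s])`. -/
theorem plane_poisson_parity_expectation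
    {Ω : Type*} [MeasurableSpace Ω] (P : Measure Ω) [IsProbabilityMeasure P]
    (N : Ω → ℝ → ℝ → ℕ) (hN : IsStdPlanePoisson P N)
    (s t x y : ℝ) (hs : 0 ≤ s) (hst : s ≤ t) (hx : 0 ≤ x) (hy : 0 ≤ y) :
    ∫ ω, (-1 : ℝ) ^ (N ω s y + N ω t x) ∂P =
      Real.exp (-2 * ((t - s) * x + |x - y| * s)) := by
  have hparity : ∀ ω, (-1 : ℝ) ^ (N ω s y + N ω t x) =
      (-1 : ℝ) ^ planeInc (N ω) s t 0 x * (-1 : ℝ) ^ planeInc (N ω) 0 s (min x y) (max x y) := by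
    intro ω
    rw [← zpow_natCast, natCast_add_eq_planeInc_add_planeInc (hN.zero_left ω) (hN.zero_right ω),
      zpow_add₀ (by norm_num), (even_two_mul _).neg_one_zpow, mul_one,
      zpow_add₀ (by norm_num)]
  have hdisj : Disjoint (Ioc s t ×ˢ Ioc 0 x) (Ioc 0 s ×ˢ Ioc (min x y) (max x y)) :=
    disjoint_prod.2 (.inl (Ioc_disjoint_Ioc_of_le le_rfl).symm)
  rw [integral_congr_ae (ae_of_all _ hparity), hN.integral_neg_one_zpow_planeInc_mul hs hst
    le_rfl hx le_rfl hs (le_min hx hy) min_le_max hdisj, ← Real.exp_add, max_sub_min_eq_abs']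
  ring_nf
end

section
/- Let m be an even positive integer and let θ_n be the Donsker kernels built from an independent family {Z_k : k∈ℕ²} of identically distributed centered random variables with E[Z_k²]=1 and E[|Z_k|^m]<∞. Then there exists a constant C_m>0 such that for every f∈L²([0,T]×[0,1]) and every n≥1, E[(∫₀ᵀ∫₀¹ f(t,x) θ_n(t,x) dx dt)^m] ≤ C_m (∫₀ᵀ∫₀¹ f(t,x)² dx dt)^{m/2}. -/
/-!
On the cell `[k₁/n, (k₁+1)/n) × [k₂/n, (k₂+1)/n)` the kernel `θ_n` equals `n Z_k`, so
`∫∫ f θ_n = ∑_k c_k Z_k` with `c_k = n ∫_{cell k} f`, a finite sum, and Cauchy–Schwarz on each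
cell (of area `1/n²`) gives `∑_k c_k² ≤ ∫∫ f²`.

Expanding `(∑_k c_k Z_k)^{2h}` over words `g : Fin (2h) → K`, independence factors the
expectation of a word over its distinct letters, so by centering only words in which every
letter occurs at least twice survive. Such a word has at most `h` distinct letters; bounding its
letters' moments by `1 + M`, where `M = E|Z_k|^{2h}`, and `|c_k|` by `(∑ c²)^{1/2}`, the
surviving words contribute at most `(h+1)^{2h+1} (1+M)^{2h} (∑ c²)^h`.
-/

open MeasureTheory ProbabilityTheory

/-- The Donsker kernels
`θ_n(t,x) = n ∑_{k=(k¹,k²)∈ℕ²} Z_k 1_{[k¹−1,k¹)×[k²−1,k²)}(tn, xn)`,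
where the index `k = (k¹,k²)` ranges over the positive integers (here encoded by
`k : ℕ × ℕ` corresponding to `(k¹,k²) = (k.1+1, k.2+1)`). -/
noncomputable def donsker {Ω : Type*} (Z : ℕ × ℕ → Ω → ℝ) (n : ℕ) (ω : Ω) (t x : ℝ) : ℝ :=
  (n : ℝ) * ∑' k : ℕ × ℕ,
    Z k ω * Set.indicator (Set.Ico (k.1 : ℝ) ((k.1 : ℝ) + 1) ×ˢ Set.Ico (k.2 : ℝ) ((k.2 : ℝ) + 1))
      (fun _ => (1 : ℝ)) (t * n, x * n)

section Combinatorics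

open Finset

variable {ι : Type*} [DecidableEq ι]

theorem sum_powersetCard_prod_le_pow_sum {b : ι → ℝ} (hb : ∀ k, 0 ≤ b k) (K : Finset ι) (r : ℕ) :
    ∑ A ∈ K.powersetCard r, ∏ k ∈ A, b k ≤ (∑ k ∈ K, b k) ^ r := by
  induction K using Finset.induction_on generalizing r with
  | empty =>
    cases r with
    | zero => simp
    | succ r => simp [powersetCard_eq_empty.2 (by simp : #(∅ : Finset ι) < r + 1)]
  | @insert a K ha ih =>
    cases r with
    | zero => simp
    | succ r =>
      have haA : ∀ A ∈ K.powersetCard r, a ∉ A := fun A hA haA => ha ((mem_powersetCard.1 hA).1 haA)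
      have hinj : Set.InjOn (insert a) (K.powersetCard r : Set (Finset ι)) :=
        fun A hA B hB hAB => by rw [← erase_insert (haA A hA), ← erase_insert (haA B hB), hAB]
      have hdisj : Disjoint (K.powersetCard (r + 1)) ((K.powersetCard r).image (insert a)) :=
        disjoint_left.2 fun A hA hA' => by
          obtain ⟨B, -, rfl⟩ := mem_image.1 hA'
          exact ha ((mem_powersetCard.1 hA).1 (mem_insert_self a B))
      have hS : 0 ≤ ∑ k ∈ K, b k := sum_nonneg fun k _ => hb k
      rw [powersetCard_succ_insert ha, sum_union hdisj, sum_image hinj,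
        sum_congr rfl fun A hA => prod_insert (haA A hA), ← mul_sum, sum_insert ha]
      calc ∑ A ∈ K.powersetCard (r + 1), ∏ k ∈ A, b k + b a * ∑ A ∈ K.powersetCard r, ∏ k ∈ A, b k
          ≤ (∑ k ∈ K, b k) ^ r * (∑ k ∈ K, b k) + b a * (∑ k ∈ K, b k) ^ r := by
            rw [← pow_succ]; gcongr <;> first | exact hb a | exact ih _
        _ ≤ (b a + ∑ k ∈ K, b k) ^ r * (∑ k ∈ K, b k) + b a * (b a + ∑ k ∈ K, b k) ^ r := by
            have := hb a; gcongr <;> linarith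
        _ = (b a + ∑ k ∈ K, b k) ^ (r + 1) := by ring

theorem sum_powerset_prod_mul_pow_le {b : ι → ℝ} (hb : ∀ k, 0 ≤ b k) (K : Finset ι) (h : ℕ) :
    ∑ A ∈ K.powerset with #A ≤ h, (∏ k ∈ A, b k) * (∑ k ∈ K, b k) ^ (h - #A)
      ≤ (h + 1) * (∑ k ∈ K, b k) ^ h := by
  set S := ∑ k ∈ K, b k
  have hS : 0 ≤ S := sum_nonneg fun k _ => hb k
  have hcard : ∀ A ∈ {A ∈ K.powerset | #A ≤ h}, #A ∈ range (h + 1) := fun A hA =>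
    mem_range_succ_iff.2 (mem_filter.1 hA).2
  rw [← sum_fiberwise_of_maps_to hcard]
  calc ∑ r ∈ range (h + 1), ∑ A ∈ {A ∈ K.powerset | #A ≤ h}.filter (#· = r),
        (∏ k ∈ A, b k) * S ^ (h - #A)
      ≤ ∑ r ∈ range (h + 1), (∑ A ∈ K.powersetCard r, ∏ k ∈ A, b k) * S ^ (h - r) := by
        refine sum_le_sum fun r _ => ?_
        rw [sum_mul]
        refine (sum_congr rfl fun A hA => by rw [(mem_filter.1 hA).2]).trans_le
          (sum_le_sum_of_subset_of_nonneg (fun A hA => ?_) fun A _ _ => ?_)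
        · simp only [mem_filter, mem_powerset] at hA
          exact mem_powersetCard.2 ⟨hA.1.1, hA.2⟩
        · exact mul_nonneg (prod_nonneg fun k _ => hb k) (pow_nonneg hS _)
    _ ≤ ∑ r ∈ range (h + 1), S ^ r * S ^ (h - r) := by
        gcongr with r
        exact sum_powersetCard_prod_le_pow_sum hb K r
    _ = (h + 1) * S ^ h := by
        rw [sum_congr rfl fun r hr => by
            rw [← pow_add, Nat.add_sub_cancel' (mem_range_succ_iff.1 hr)],
          sum_const, card_range, nsmul_eq_mul]
        push_cast; ring

variable {n : ℕ}

theorem two_le_card_fiber {g : Fin n → ι} (hg : ∀ i, #{j | g j = g i} ≠ 1) {k : ι}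
    (hk : k ∈ univ.image g) : 2 ≤ #{j | g j = k} := by
  obtain ⟨i, -, rfl⟩ := mem_image.1 hk
  have : 0 < #{j | g j = g i} := card_pos.2 ⟨i, by simp⟩
  have := hg i
  omega

theorem two_mul_card_image_le {g : Fin n → ι} (hg : ∀ i, #{j | g j = g i} ≠ 1) :
    2 * #(univ.image g) ≤ n :=
  calc 2 * #(univ.image g) = ∑ _k ∈ univ.image g, 2 := by rw [sum_const, smul_eq_mul, mul_comm]
    _ ≤ ∑ k ∈ univ.image g, #{i | g i = k} := sum_le_sum fun k hk => two_le_card_fiber hg hk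
    _ = n := by rw [← card_eq_sum_card_image, card_univ, Fintype.card_fin]

theorem prod_abs_le_of_card_fiber_ne_one {g : Fin n → ι} (hg : ∀ i, #{j | g j = g i} ≠ 1)
    {c : ι → ℝ} {s : ℝ} (hc : ∀ k ∈ univ.image g, |c k| ≤ s) :
    ∏ i, |c (g i)| ≤ (∏ k ∈ univ.image g, c k ^ 2) * s ^ (n - 2 * #(univ.image g)) := by
  have hsum : ∑ k ∈ univ.image g, (#{i | g i = k} - 2) = n - 2 * #(univ.image g) := by
    rw [sum_tsub_distrib _ fun k hk => two_le_card_fiber hg hk, ← card_eq_sum_card_image,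
      sum_const, smul_eq_mul, card_univ, Fintype.card_fin, mul_comm]
  rw [prod_comp (fun k => |c k|) g, ← hsum, ← prod_pow_eq_pow_sum, ← prod_mul_distrib]
  refine prod_le_prod (fun k _ => by positivity) fun k hk => ?_
  have hsplit : #{i | g i = k} = 2 + (#{i | g i = k} - 2) := by
    have := two_le_card_fiber hg hk; omega
  rw [hsplit, pow_add, sq_abs, Nat.add_sub_cancel_left]
  gcongr
  exact hc k hk

theorem sum_prod_abs_le_of_card_fiber_ne_one (K : Finset ι) (c : ι → ℝ) (h : ℕ) :
    ∑ g ∈ Fintype.piFinset (fun _ : Fin (2 * h) => K) with ∀ i, #{j | g j = g i} ≠ 1,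
        ∏ i, |c (g i)|
      ≤ (h + 1) ^ (2 * h + 1) * (∑ k ∈ K, c k ^ 2) ^ h := by
  set S := ∑ k ∈ K, c k ^ 2
  have hS : 0 ≤ S := sum_nonneg fun k _ => sq_nonneg _
  set V := {g ∈ Fintype.piFinset (fun _ : Fin (2 * h) => K) | ∀ i, #{j | g j = g i} ≠ 1}
  set φ : Finset ι → ℝ := fun A => (∏ k ∈ A, c k ^ 2) * S ^ (h - #A)
  have himage : ∀ g ∈ V, univ.image g ∈ {A ∈ K.powerset | #A ≤ h} := fun g hg => by
    simp only [V, mem_filter, Fintype.mem_piFinset] at hg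
    have := two_mul_card_image_le hg.2
    exact mem_filter.2 ⟨mem_powerset.2 fun k hk => by
      obtain ⟨i, -, rfl⟩ := mem_image.1 hk; exact hg.1 i, by omega⟩
  have hterm : ∀ g ∈ V, ∏ i, |c (g i)| ≤ φ (univ.image g) := fun g hg => by
    simp only [V, mem_filter, Fintype.mem_piFinset] at hg
    have hc : ∀ k ∈ univ.image g, |c k| ≤ √S := fun k hk => by
      obtain ⟨i, -, rfl⟩ := mem_image.1 hk
      exact Real.abs_le_sqrt (single_le_sum (fun k _ => sq_nonneg (c k)) (hg.1 i))
    refine (prod_abs_le_of_card_fiber_ne_one hg.2 hc).trans_eq ?_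
    rw [← Nat.mul_sub, pow_mul, Real.sq_sqrt hS]
  have hfiber : ∀ A ∈ {A ∈ K.powerset | #A ≤ h}, #{g ∈ V | univ.image g = A} ≤ (h + 1) ^ (2 * h) :=
    fun A hA => calc
      #{g ∈ V | univ.image g = A} ≤ #(Fintype.piFinset fun _ : Fin (2 * h) => A) :=
        card_le_card fun g hg => Fintype.mem_piFinset.2 fun i =>
          (mem_filter.1 hg).2 ▸ mem_image_of_mem g (mem_univ i)
      _ ≤ (h + 1) ^ (2 * h) := by
        rw [Fintype.card_piFinset, prod_const, card_univ, Fintype.card_fin]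
        exact Nat.pow_le_pow_left (Nat.le_succ_of_le (mem_filter.1 hA).2) _
  calc ∑ g ∈ V, ∏ i, |c (g i)| ≤ ∑ g ∈ V, φ (univ.image g) := sum_le_sum hterm
    _ = ∑ A ∈ {A ∈ K.powerset | #A ≤ h}, #{g ∈ V | univ.image g = A} * φ A := by
        rw [← sum_fiberwise_of_maps_to himage]
        refine sum_congr rfl fun A _ => ?_
        rw [sum_congr rfl fun g hg => by rw [(mem_filter.1 hg).2], sum_const, nsmul_eq_mul]
    _ ≤ ∑ A ∈ {A ∈ K.powerset | #A ≤ h}, (h + 1) ^ (2 * h) * φ A := by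
        gcongr with A hA
        exact_mod_cast hfiber A hA
    _ ≤ (h + 1) ^ (2 * h) * ((h + 1) * S ^ h) := by
        rw [← mul_sum]
        gcongr
        exact sum_powerset_prod_mul_pow_le (fun k => sq_nonneg (c k)) K h
    _ = (h + 1) ^ (2 * h + 1) * S ^ h := by ring

end Combinatorics

section Moments

open Finset

variable {Ω : Type*} [MeasurableSpace Ω] {P : Measure Ω}

theorem memLp_of_integrable_abs_pow {f : Ω → ℝ} (hf : AEStronglyMeasurable f P) {m : ℕ}
    (hint : Integrable (fun ω => |f ω| ^ m) P) : MemLp f m P := by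
  rcases eq_or_ne m 0 with rfl | hm
  · simpa using memLp_zero_iff_aestronglyMeasurable.2 hf
  · refine (integrable_norm_rpow_iff hf (by exact_mod_cast hm) (ENNReal.natCast_ne_top m)).1 ?_
    simpa [Real.norm_eq_abs] using hint

theorem abs_integral_pow_le [IsProbabilityMeasure P] {f : Ω → ℝ} {m : ℕ}
    (hint : Integrable (fun ω => |f ω| ^ m) P) {a : ℕ} (ha : a ≤ m) :
    |∫ ω, f ω ^ a ∂P| ≤ 1 + ∫ ω, |f ω| ^ m ∂P := by
  have hle : ∀ ω, |f ω| ^ a ≤ 1 + |f ω| ^ m := fun ω => by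
    rcases le_or_gt |f ω| 1 with h1 | h1
    · linarith [pow_le_one₀ (abs_nonneg (f ω)) h1 (n := a), pow_nonneg (abs_nonneg (f ω)) m]
    · linarith [pow_le_pow_right₀ h1.le ha]
  calc |∫ ω, f ω ^ a ∂P| ≤ ∫ ω, |f ω ^ a| ∂P := abs_integral_le_integral_abs
    _ ≤ ∫ ω, (1 + |f ω| ^ m) ∂P :=
        integral_mono_of_nonneg (ae_of_all _ fun ω => abs_nonneg _)
          ((integrable_const 1).add hint) (ae_of_all _ fun ω => by simpa [abs_pow] using hle ω)
    _ = 1 + ∫ ω, |f ω| ^ m ∂P := by rw [integral_add (integrable_const 1) hint]; simp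

variable {ι : Type*} {Z : ι → Ω → ℝ} {n : ℕ}

theorem integrable_prod_comp_of_memLp [IsFiniteMeasure P] (hZ : ∀ k, MemLp (Z k) n P)
    (g : Fin n → ι) : Integrable (fun ω => ∏ i, Z (g i) ω) P := by
  refine memLp_one_iff_integrable.1 ((MemLp.prod' fun i _ => hZ (g i)).mono_exponent ?_)
  rw [sum_const, card_univ, Fintype.card_fin, nsmul_eq_mul, ENNReal.one_le_inv]
  exact ENNReal.mul_inv_le_one _

theorem integral_prod_comp_eq_prod_integral_pow [DecidableEq ι] (hZ : ∀ k, Measurable (Z k))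
    (hindep : iIndepFun Z P) (g : Fin n → ι) :
    ∫ ω, ∏ i, Z (g i) ω ∂P = ∏ k ∈ univ.image g, ∫ ω, Z k ω ^ #{i | g i = k} ∂P := by
  have hpt : ∀ ω, ∏ i, Z (g i) ω = ∏ k : univ.image g, Z k ω ^ #{i | g i = k} := fun ω => by
    rw [prod_comp (fun k => Z k ω) g]; exact (prod_coe_sort _ _).symm
  rw [integral_congr_ae (ae_of_all _ hpt), ← prod_coe_sort]
  exact iIndepFun.integral_fun_prod_comp (X := fun k : univ.image g => Z k)
    (f := fun k (x : ℝ) => x ^ #{i | g i = k}) (hindep.precomp Subtype.val_injective)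
    (fun k => (hZ k).aemeasurable) fun k => (continuous_pow _).aestronglyMeasurable

theorem sum_mul_pow_eq (K : Finset ι) (c : ι → ℝ) (z : ι → ℝ) :
    (∑ k ∈ K, c k * z k) ^ n
      = ∑ g ∈ Fintype.piFinset (fun _ : Fin n => K), (∏ i, c (g i)) * ∏ i, z (g i) := by
  rw [sum_pow']
  exact sum_congr rfl fun g _ => prod_mul_distrib

theorem integrable_sum_mul_pow [IsFiniteMeasure P] (hZ : ∀ k, MemLp (Z k) n P)
    (K : Finset ι) (c : ι → ℝ) : Integrable (fun ω => (∑ k ∈ K, c k * Z k ω) ^ n) P := by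
  simp_rw [sum_mul_pow_eq]
  exact integrable_finsetSum _ fun g _ => (integrable_prod_comp_of_memLp hZ g).const_mul _

theorem integral_sum_mul_pow_le [IsProbabilityMeasure P] (hZ : ∀ k, Measurable (Z k))
    (hindep : iIndepFun Z P) (hcent : ∀ k, ∫ ω, Z k ω ∂P = 0) {h : ℕ}
    (hmom : ∀ k, Integrable (fun ω => |Z k ω| ^ (2 * h)) P) {M : ℝ} (hM0 : 0 ≤ M)
    (hM : ∀ k, ∫ ω, |Z k ω| ^ (2 * h) ∂P ≤ M) (K : Finset ι) (c : ι → ℝ) :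
    ∫ ω, (∑ k ∈ K, c k * Z k ω) ^ (2 * h) ∂P
      ≤ (h + 1) ^ (2 * h + 1) * (1 + M) ^ (2 * h) * (∑ k ∈ K, c k ^ 2) ^ h := by
  classical
  have hLp : ∀ k, MemLp (Z k) ↑(2 * h) P := fun k =>
    memLp_of_integrable_abs_pow (hZ k).aestronglyMeasurable (hmom k)
  have hmoment : ∀ g : Fin (2 * h) → ι, |∫ ω, ∏ i, Z (g i) ω ∂P| ≤ (1 + M) ^ (2 * h) := by
    intro g
    rw [integral_prod_comp_eq_prod_integral_pow hZ hindep, abs_prod]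
    calc ∏ k ∈ univ.image g, |∫ ω, Z k ω ^ #{i | g i = k} ∂P| ≤ ∏ _k ∈ univ.image g, (1 + M) :=
          prod_le_prod (fun k _ => abs_nonneg _) fun k _ =>
            (abs_integral_pow_le (hmom k) ((card_filter_le _ _).trans_eq (by simp))).trans
              (by linarith [hM k])
      _ ≤ (1 + M) ^ (2 * h) := by
          rw [prod_const]
          exact pow_le_pow_right₀ (by linarith) (card_image_le.trans_eq (by simp))
  have hvanish : ∀ g : Fin (2 * h) → ι, (∃ i, #{j | g j = g i} = 1) →
      ∫ ω, ∏ i, Z (g i) ω ∂P = 0 := by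
    rintro g ⟨i, hi⟩
    rw [integral_prod_comp_eq_prod_integral_pow hZ hindep]
    exact prod_eq_zero (mem_image_of_mem g (mem_univ i)) (by simp only [hi, pow_one, hcent])
  set V := Fintype.piFinset fun _ : Fin (2 * h) => K
  calc ∫ ω, (∑ k ∈ K, c k * Z k ω) ^ (2 * h) ∂P
      = ∑ g ∈ V, (∏ i, c (g i)) * ∫ ω, ∏ i, Z (g i) ω ∂P := by
        simp_rw [sum_mul_pow_eq]
        rw [integral_finsetSum _ fun g _ => (integrable_prod_comp_of_memLp hLp g).const_mul _]
        simp_rw [integral_const_mul]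
        rfl
    _ = ∑ g ∈ V with ∀ i, #{j | g j = g i} ≠ 1, (∏ i, c (g i)) * ∫ ω, ∏ i, Z (g i) ω ∂P := by
        refine (sum_filter_of_ne fun g _ hne => ?_).symm
        by_contra hg
        push Not at hg
        exact hne (by rw [hvanish g hg, mul_zero])
    _ ≤ ∑ g ∈ V with ∀ i, #{j | g j = g i} ≠ 1, (∏ i, |c (g i)|) * (1 + M) ^ (2 * h) := by
        refine sum_le_sum fun g _ => (le_abs_self _).trans ?_
        rw [abs_mul, abs_prod]
        exact mul_le_mul_of_nonneg_left (hmoment g) (prod_nonneg fun i _ => abs_nonneg _)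
    _ ≤ (h + 1) ^ (2 * h + 1) * (∑ k ∈ K, c k ^ 2) ^ h * (1 + M) ^ (2 * h) := by
        rw [← sum_mul]
        gcongr
        exact sum_prod_abs_le_of_card_fiber_ne_one K c h
    _ = (h + 1) ^ (2 * h + 1) * (1 + M) ^ (2 * h) * (∑ k ∈ K, c k ^ 2) ^ h := by ring

end Moments

theorem sq_setIntegral_le_measureReal_mul {X : Type*} [MeasurableSpace X] {μ : Measure X}
    {s : Set X} (hs : μ s ≠ ⊤) {g : X → ℝ} (hg : IntegrableOn g s μ)
    (hg2 : IntegrableOn (fun x => g x ^ 2) s μ) :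
    (∫ x in s, g x ∂μ) ^ 2 ≤ μ.real s * ∫ x in s, g x ^ 2 ∂μ := by
  rcases eq_or_ne (μ s) 0 with h0 | h0
  · simp [Measure.restrict_eq_zero.2 h0]
  have hV : 0 < μ.real s := ENNReal.toReal_pos h0 hs
  have hJensen := (even_two.convexOn_pow (𝕜 := ℝ)).map_set_average_le
    (continuous_pow 2).continuousOn isClosed_univ h0 hs (ae_of_all _ fun _ => Set.mem_univ _)
    hg hg2
  simp only [setAverage_eq, smul_eq_mul, mul_pow] at hJensen
  calc (∫ x in s, g x ∂μ) ^ 2 = μ.real s ^ 2 * ((μ.real s)⁻¹ ^ 2 * (∫ x in s, g x ∂μ) ^ 2) := by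
        field_simp
    _ ≤ μ.real s ^ 2 * ((μ.real s)⁻¹ * ∫ x in s, g x ^ 2 ∂μ) := by gcongr
    _ = μ.real s * ∫ x in s, g x ^ 2 ∂μ := by field_simp

section DonskerCells

open Finset Set

variable {n : ℕ}

def donskerCell (n : ℕ) (k : ℕ × ℕ) : Set (ℝ × ℝ) :=
  Ico ((k.1 : ℝ) / n) ((k.1 + 1) / n) ×ˢ Ico ((k.2 : ℝ) / n) ((k.2 + 1) / n)

theorem measurableSet_donskerCell (k : ℕ × ℕ) : MeasurableSet (donskerCell n k) :=
  measurableSet_Ico.prod measurableSet_Ico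

theorem volume_donskerCell (k : ℕ × ℕ) :
    volume (donskerCell n k) = ENNReal.ofReal (1 / n) * ENNReal.ofReal (1 / n) := by
  rw [donskerCell, Measure.volume_eq_prod, Measure.prod_prod, Real.volume_Ico, Real.volume_Ico,
    div_sub_div_same, div_sub_div_same, add_sub_cancel_left, add_sub_cancel_left]

theorem mem_donskerCell (hn : 0 < n) {k : ℕ × ℕ} {p : ℝ × ℝ} :
    p ∈ donskerCell n k ↔
      (p.1 * n, p.2 * n) ∈ Ico (k.1 : ℝ) (k.1 + 1) ×ˢ Ico (k.2 : ℝ) (k.2 + 1) := by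
  have hn' : (0 : ℝ) < n := Nat.cast_pos.2 hn
  simp only [donskerCell, mem_prod, Set.mem_Ico, div_le_iff₀ hn', lt_div_iff₀ hn']

theorem floor_eq_of_mem_donskerCell (hn : 0 < n) {k : ℕ × ℕ} {p : ℝ × ℝ}
    (hp : p ∈ donskerCell n k) : (⌊p.1 * n⌋₊, ⌊p.2 * n⌋₊) = k := by
  obtain ⟨⟨h1, h1'⟩, h2, h2'⟩ := (mem_donskerCell hn).1 hp
  dsimp only at h1 h1' h2 h2'
  exact Prod.ext ((Nat.floor_eq_iff ((Nat.cast_nonneg _).trans h1)).2 ⟨h1, h1'⟩)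
    ((Nat.floor_eq_iff ((Nat.cast_nonneg _).trans h2)).2 ⟨h2, h2'⟩)

theorem mem_donskerCell_floor (hn : 0 < n) {p : ℝ × ℝ} (h1 : 0 ≤ p.1) (h2 : 0 ≤ p.2) :
    p ∈ donskerCell n (⌊p.1 * n⌋₊, ⌊p.2 * n⌋₊) := by
  have hn' : (0 : ℝ) ≤ n := Nat.cast_nonneg n
  rw [mem_donskerCell hn]
  exact ⟨⟨Nat.floor_le (mul_nonneg h1 hn'), Nat.lt_floor_add_one _⟩,
    Nat.floor_le (mul_nonneg h2 hn'), Nat.lt_floor_add_one _⟩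

theorem pairwise_disjoint_donskerCell (hn : 0 < n) :
    Pairwise (Function.onFun Disjoint (donskerCell n)) :=
  fun _ _ hkl => Set.disjoint_left.2 fun _ hk hl =>
    hkl ((floor_eq_of_mem_donskerCell hn hk).symm.trans (floor_eq_of_mem_donskerCell hn hl))

theorem donsker_eq_of_mem_donskerCell {Ω : Type*} (Z : ℕ × ℕ → Ω → ℝ) (ω : Ω) (hn : 0 < n)
    {k : ℕ × ℕ} {p : ℝ × ℝ} (hp : p ∈ donskerCell n k) : donsker Z n ω p.1 p.2 = n * Z k ω := by
  rw [donsker, tsum_eq_single k fun l hl => ?_, indicator_of_mem ((mem_donskerCell hn).1 hp),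
    mul_one]
  refine mul_eq_zero_of_right _ (indicator_of_notMem (fun hpl => ?_) _)
  exact Set.disjoint_left.1 (pairwise_disjoint_donskerCell hn hl) ((mem_donskerCell hn).2 hpl) hp

variable {D : Set (ℝ × ℝ)} {K : Finset (ℕ × ℕ)} {f : ℝ × ℝ → ℝ}

theorem biUnion_donskerCell_inter_eq (hK : D ⊆ ⋃ k ∈ K, donskerCell n k) :
    ⋃ k ∈ K, donskerCell n k ∩ D = D := by
  rw [← Set.iUnion₂_inter, Set.inter_eq_right.2 hK]

theorem integrableOn_mul_donsker {Ω : Type*} (Z : ℕ × ℕ → Ω → ℝ) (ω : Ω) (hn : 0 < n)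
    (hD : MeasurableSet D) (hK : D ⊆ ⋃ k ∈ K, donskerCell n k) (hf : IntegrableOn f D) :
    IntegrableOn (fun p => f p * donsker Z n ω p.1 p.2) D := by
  rw [← biUnion_donskerCell_inter_eq hK]
  exact integrableOn_finset_iUnion.2 fun k _ =>
    IntegrableOn.congr_fun ((hf.mono_set inter_subset_right).mul_const (n * Z k ω))
      (fun p hp => by rw [donsker_eq_of_mem_donskerCell Z ω hn hp.1])
      ((measurableSet_donskerCell k).inter hD)

theorem setIntegral_mul_donsker {Ω : Type*} (Z : ℕ × ℕ → Ω → ℝ) (ω : Ω) (hn : 0 < n)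
    (hD : MeasurableSet D) (hK : D ⊆ ⋃ k ∈ K, donskerCell n k) (hf : IntegrableOn f D) :
    ∫ p in D, f p * donsker Z n ω p.1 p.2
      = ∑ k ∈ K, (n * ∫ p in donskerCell n k ∩ D, f p) * Z k ω := by
  have hint := integrableOn_mul_donsker Z ω hn hD hK hf
  calc ∫ p in D, f p * donsker Z n ω p.1 p.2
      = ∫ p in ⋃ k ∈ K, donskerCell n k ∩ D, f p * donsker Z n ω p.1 p.2 := by
        rw [biUnion_donskerCell_inter_eq hK]
    _ = ∑ k ∈ K, ∫ p in donskerCell n k ∩ D, f p * donsker Z n ω p.1 p.2 :=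
        integral_biUnion_finset K (fun k _ => (measurableSet_donskerCell k).inter hD)
          (fun k _ l _ hkl => (pairwise_disjoint_donskerCell hn hkl).mono inter_subset_left
            inter_subset_left)
          fun k _ => hint.mono_set inter_subset_right
    _ = ∑ k ∈ K, (n * ∫ p in donskerCell n k ∩ D, f p) * Z k ω := by
        refine sum_congr rfl fun k _ => ?_
        rw [setIntegral_congr_fun ((measurableSet_donskerCell k).inter hD)
          fun p hp => by rw [donsker_eq_of_mem_donskerCell Z ω hn hp.1], integral_mul_const]
        ring

theorem sq_mul_setIntegral_donskerCell_inter_le (hn : 0 < n) (hf : IntegrableOn f D)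
    (hf2 : IntegrableOn (fun p => f p ^ 2) D) (k : ℕ × ℕ) :
    (n * ∫ p in donskerCell n k ∩ D, f p) ^ 2 ≤ ∫ p in donskerCell n k ∩ D, f p ^ 2 := by
  have hfin : volume (donskerCell n k) ≠ ⊤ := by
    rw [volume_donskerCell]; exact ENNReal.mul_ne_top ENNReal.ofReal_ne_top ENNReal.ofReal_ne_top
  have hvol : volume.real (donskerCell n k ∩ D) ≤ 1 / n * (1 / n) := by
    refine (measureReal_mono inter_subset_left hfin).trans_eq ?_
    rw [measureReal_def, volume_donskerCell, ENNReal.toReal_mul,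
      ENNReal.toReal_ofReal (by positivity)]
  have hn' : (0 : ℝ) < n := Nat.cast_pos.2 hn
  calc (n * ∫ p in donskerCell n k ∩ D, f p) ^ 2
      = n ^ 2 * (∫ p in donskerCell n k ∩ D, f p) ^ 2 := by ring
    _ ≤ n ^ 2 * (volume.real (donskerCell n k ∩ D) * ∫ p in donskerCell n k ∩ D, f p ^ 2) := by
        gcongr
        exact sq_setIntegral_le_measureReal_mul
          (ne_top_of_le_ne_top hfin (measure_mono inter_subset_left))
          (hf.mono_set inter_subset_right) (hf2.mono_set inter_subset_right)
    _ ≤ n ^ 2 * (1 / n * (1 / n) * ∫ p in donskerCell n k ∩ D, f p ^ 2) := by gcongr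
    _ = ∫ p in donskerCell n k ∩ D, f p ^ 2 := by field_simp

theorem sum_sq_setIntegral_donskerCell_le (hn : 0 < n) (hD : MeasurableSet D)
    (hf : IntegrableOn f D) (hf2 : IntegrableOn (fun p => f p ^ 2) D) (K : Finset (ℕ × ℕ)) :
    ∑ k ∈ K, (n * ∫ p in donskerCell n k ∩ D, f p) ^ 2 ≤ ∫ p in D, f p ^ 2 := by
  calc ∑ k ∈ K, (n * ∫ p in donskerCell n k ∩ D, f p) ^ 2
      ≤ ∑ k ∈ K, ∫ p in donskerCell n k ∩ D, f p ^ 2 :=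
        sum_le_sum fun k _ => sq_mul_setIntegral_donskerCell_inter_le hn hf hf2 k
    _ = ∫ p in ⋃ k ∈ K, donskerCell n k ∩ D, f p ^ 2 :=
        (integral_biUnion_finset K (fun k _ => (measurableSet_donskerCell k).inter hD)
          (fun k _ l _ hkl => (pairwise_disjoint_donskerCell hn hkl).mono inter_subset_left
            inter_subset_left)
          fun k _ => hf2.mono_set inter_subset_right).symm
    _ ≤ ∫ p in D, f p ^ 2 :=
        setIntegral_mono_set hf2 (ae_of_all _ fun p => sq_nonneg (f p))
          (Filter.Eventually.of_forall (iUnion₂_subset fun k _ => inter_subset_right))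

theorem intervalIntegral_intervalIntegral_eq_setIntegral {a b c d : ℝ} (hab : a ≤ b) (hcd : c ≤ d)
    {F : ℝ → ℝ → ℝ} (hF : IntegrableOn (fun p : ℝ × ℝ => F p.1 p.2) (Ioc a b ×ˢ Ioc c d)) :
    ∫ t in a..b, ∫ x in c..d, F t x = ∫ p in Ioc a b ×ˢ Ioc c d, F p.1 p.2 := by
  simp only [intervalIntegral.integral_of_le hab, intervalIntegral.integral_of_le hcd]
  rw [Measure.volume_eq_prod, setIntegral_prod _ hF]

theorem exists_integral_mul_donsker_eq_sum {T : ℝ} (hT : 0 < T) {Ω : Type*}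
    (Z : ℕ × ℕ → Ω → ℝ) (hn : 0 < n) {f : ℝ → ℝ → ℝ} (hfm : Measurable (Function.uncurry f))
    (hf2 : IntegrableOn (fun q : ℝ × ℝ => f q.1 q.2 ^ 2) (Icc (0 : ℝ) T ×ˢ Icc (0 : ℝ) 1)) :
    ∃ (K : Finset (ℕ × ℕ)) (c : ℕ × ℕ → ℝ),
      (∀ ω, ∫ t in (0 : ℝ)..T, ∫ x in (0 : ℝ)..1, f t x * donsker Z n ω t x
        = ∑ k ∈ K, c k * Z k ω) ∧
      ∑ k ∈ K, c k ^ 2 ≤ ∫ t in (0 : ℝ)..T, ∫ x in (0 : ℝ)..1, f t x ^ 2 := by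
  set D : Set (ℝ × ℝ) := Ioc 0 T ×ˢ Ioc (0 : ℝ) 1
  have hD : MeasurableSet D := measurableSet_Ioc.prod measurableSet_Ioc
  have hK : D ⊆ ⋃ k ∈ range (⌊T * n⌋₊ + 1) ×ˢ range (n + 1), donskerCell n k := by
    rintro p ⟨⟨ht0, htT⟩, hx0, hx1⟩
    refine mem_iUnion₂.2 ⟨_, mem_product.2 ⟨mem_range_succ_iff.2 ?_, mem_range_succ_iff.2 ?_⟩,
      mem_donskerCell_floor hn ht0.le hx0.le⟩
    · exact Nat.floor_le_floor (mul_le_mul_of_nonneg_right htT n.cast_nonneg)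
    · exact Nat.floor_le_of_le (mul_le_of_le_one_left n.cast_nonneg hx1)
  have hf2D : IntegrableOn (fun p : ℝ × ℝ => f p.1 p.2 ^ 2) D :=
    hf2.mono_set (prod_mono Ioc_subset_Icc_self Ioc_subset_Icc_self)
  have : IsFiniteMeasure (volume.restrict D) := isFiniteMeasure_restrict.2
    ((Metric.isBounded_Ioc 0 T).prod (Metric.isBounded_Ioc (0 : ℝ) 1)).measure_lt_top.ne
  have hfD : IntegrableOn (fun p : ℝ × ℝ => f p.1 p.2) D :=
    ((memLp_two_iff_integrable_sq hfm.aestronglyMeasurable).2 hf2D).integrable one_le_two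
  refine ⟨range (⌊T * n⌋₊ + 1) ×ˢ range (n + 1), fun k => n * ∫ p in donskerCell n k ∩ D, f p.1 p.2,
    fun ω => ?_, ?_⟩
  · rw [intervalIntegral_intervalIntegral_eq_setIntegral hT.le zero_le_one
      (integrableOn_mul_donsker Z ω hn hD hK hfD)]
    exact setIntegral_mul_donsker Z ω hn hD hK hfD
  · rw [intervalIntegral_intervalIntegral_eq_setIntegral hT.le zero_le_one hf2D]
    exact sum_sq_setIntegral_donskerCell_le hn hD hfD hf2D _

end DonskerCells

theorem donsker_moment_bound_general (T : ℝ) (hT : 0 < T)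
    {Ω : Type*} [MeasurableSpace Ω] (P : Measure Ω) [IsProbabilityMeasure P]
    (Z : ℕ × ℕ → Ω → ℝ) (hZmeas : ∀ k, Measurable (Z k))
    (hindep : iIndepFun Z P)
    (hident : ∀ k k' : ℕ × ℕ, Measure.map (Z k) P = Measure.map (Z k') P)
    (hcent : ∀ k, ∫ ω, Z k ω ∂P = 0)
    (m : ℕ) (hmeven : Even m)
    (hmom : ∀ k, Integrable (fun ω => |Z k ω| ^ m) P) :
    ∃ C : ℝ, 0 < C ∧ ∀ f : ℝ → ℝ → ℝ, Measurable (Function.uncurry f) →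
      IntegrableOn (fun q : ℝ × ℝ => (f q.1 q.2) ^ 2)
        (Set.Icc (0 : ℝ) T ×ˢ Set.Icc (0 : ℝ) 1) →
      ∀ n : ℕ, 1 ≤ n →
        ∫⁻ ω, ENNReal.ofReal
            ((∫ t in (0 : ℝ)..T, ∫ x in (0 : ℝ)..1, f t x * donsker Z n ω t x) ^ m) ∂P ≤
          ENNReal.ofReal
            (C * (∫ t in (0 : ℝ)..T, ∫ x in (0 : ℝ)..1, (f t x) ^ 2) ^ ((m : ℝ) / 2)) := by
  obtain ⟨h, rfl⟩ := hmeven.two_dvd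
  set M := ∫ ω, |Z (0, 0) ω| ^ (2 * h) ∂P
  have hM : ∀ k, ∫ ω, |Z k ω| ^ (2 * h) ∂P ≤ M := fun k =>
    ((IdentDistrib.mk (hZmeas k).aemeasurable (hZmeas (0, 0)).aemeasurable (hident k (0, 0))).comp
      (continuous_abs.pow _).measurable).integral_eq.le
  have hM0 : 0 ≤ M := integral_nonneg fun ω => by positivity
  refine ⟨(h + 1) ^ (2 * h + 1) * (1 + M) ^ (2 * h), by positivity, fun f hfm hf2 n hn => ?_⟩
  obtain ⟨K, c, hrepr, hc⟩ := exists_integral_mul_donsker_eq_sum hT Z hn hfm hf2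
  have hLp : ∀ k, MemLp (Z k) ↑(2 * h) P := fun k =>
    memLp_of_integrable_abs_pow (hZmeas k).aestronglyMeasurable (hmom k)
  simp_rw [hrepr]
  rw [← ofReal_integral_eq_lintegral_ofReal (integrable_sum_mul_pow hLp K c)
    (ae_of_all _ fun ω => (even_two_mul h).pow_nonneg _)]
  refine ENNReal.ofReal_le_ofReal
    ((integral_sum_mul_pow_le hZmeas hindep hcent hmom hM0 hM K c).trans ?_)
  rw [show ((2 * h : ℕ) : ℝ) / 2 = h by push_cast; ring, Real.rpow_natCast]
  gcongr

/-- Moment bound for the Donsker kernels: if `{Z_k}` are i.i.d., centered, with unit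
variance and finite `m`-th moment (`m` an even positive integer), then there is
`C_m > 0` such that for every `f ∈ L²([0,T]×[0,1])` and every `n ≥ 1`,
`E[(∫₀ᵀ∫₀¹ f θ_n)^m] ≤ C_m (∫₀ᵀ∫₀¹ f²)^{m/2}`. -/
theorem donsker_moment_bound (T : ℝ) (hT : 0 < T)
    {Ω : Type*} [MeasurableSpace Ω] (P : Measure Ω) [IsProbabilityMeasure P]
    (Z : ℕ × ℕ → Ω → ℝ) (hZmeas : ∀ k, Measurable (Z k))
    (hindep : iIndepFun Z P)
    (hident : ∀ k k' : ℕ × ℕ, Measure.map (Z k) P = Measure.map (Z k') P)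
    (hcent : ∀ k, ∫ ω, Z k ω ∂P = 0)
    (hvar : ∀ k, ∫ ω, (Z k ω) ^ 2 ∂P = 1)
    (m : ℕ) (hmeven : Even m) (hm : 0 < m)
    (hmom : ∀ k, Integrable (fun ω => |Z k ω| ^ m) P) :
    ∃ C : ℝ, 0 < C ∧ ∀ f : ℝ → ℝ → ℝ, Measurable (Function.uncurry f) →
      IntegrableOn (fun q : ℝ × ℝ => (f q.1 q.2) ^ 2)
        (Set.Icc (0 : ℝ) T ×ˢ Set.Icc (0 : ℝ) 1) →
      ∀ n : ℕ, 1 ≤ n →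
        ∫⁻ ω, ENNReal.ofReal
            ((∫ t in (0 : ℝ)..T, ∫ x in (0 : ℝ)..1, f t x * donsker Z n ω t x) ^ m) ∂P ≤
          ENNReal.ofReal
            (C * (∫ t in (0 : ℝ)..T, ∫ x in (0 : ℝ)..1, (f t x) ^ 2) ^ ((m : ℝ) / 2)) :=
  donsker_moment_bound_general T hT P Z hZmeas hindep hident hcent m hmeven hmom
end

section
/- Let u₀:[0,1]→ℝ be continuous and b:ℝ→ℝ Lipschitz with Lipschitz constant L. There exists a finite constant A>0, depending only on T and L, with the following property: if η₁,η₂∈C([0,T]×[0,1]) and z₁,z₂ are continuous functions on [0,T]×[0,1] satisfying, for i=1,2 and all (t,x)∈(0,T]×[0,1], z_i(t,x) = ∫₀¹ G_t(x,y) u₀(y) dy + ∫₀ᵗ∫₀¹ G_{t−s}(x,y) b(z_i(s,y)) dy ds + η_i(t,x), then sup_{(t,x)∈[0,T]×[0,1]} |z₁(t,x) − z₂(t,x)| ≤ A · sup_{(t,x)∈[0,T]×[0,1]} |η₁(t,x) − η₂(t,x)|. In particular, the solution map ψ: η ↦ z_η is Lipschitz continuous from C([0,T]×[0,1]) to itself.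 -/
open MeasureTheory

/-- The Green function of the heat equation on `[0,1]` with Dirichlet boundary
conditions: `G_t(x,y) = 2 ∑_{n ≥ 1} sin(nπx) sin(nπy) exp(−n²π²t)`. -/
noncomputable def heatGreen (t x y : ℝ) : ℝ :=
  2 * ∑' n : ℕ, Real.sin (((n : ℝ) + 1) * Real.pi * x) * Real.sin (((n : ℝ) + 1) * Real.pi * y) *
    Real.exp (-(((n : ℝ) + 1) ^ 2) * Real.pi ^ 2 * t)

/-- `z` solves the deterministic mild heat equation with initial condition `u₀`,
drift `b` and perturbation `η`: for all `(t,x) ∈ (0,T] × [0,1]`,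
`z(t,x) = ∫₀¹ G_t(x,y) u₀(y) dy + ∫₀ᵗ∫₀¹ G_{t−s}(x,y) b(z(s,y)) dy ds + η(t,x)`. -/
def IsMildSolution (T : ℝ) (u₀ b : ℝ → ℝ) (η z : ℝ → ℝ → ℝ) : Prop :=
  ∀ t ∈ Set.Ioc (0 : ℝ) T, ∀ x ∈ Set.Icc (0 : ℝ) 1,
    z t x = (∫ y in (0 : ℝ)..1, heatGreen t x y * u₀ y) +
      (∫ s in (0 : ℝ)..t, ∫ y in (0 : ℝ)..1, heatGreen (t - s) x y * b (z s y)) + η t x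

open Set Real Function

/-!
The heat kernel satisfies `|G_t(x,y)| ≤ t^(-1/2)` (compare its series with a Gaussian integral),
so `δ = z₁ - z₂` obeys the Volterra inequality
`|δ(t,x)| ≤ sup |η₁ - η₂| + L ∫₀ᵗ (t-s)^(-1/2) sup_y |δ(s,y)| ds`.
In the weighted norm `sup e^(-ct) |δ(t,x)|` the kernel costs at most `L √(π/c)` (a Gamma integral),
which is `≤ 1/2` once `c` is large; hence that norm is at most `2 sup |η₁ - η₂|`, and `A = 2e^(cT)`.
-/

section GaussianSum

variable {a : ℝ}

lemma exp_neg_succ_sq_mul_le_integral (ha : 0 < a) (n : ℕ) :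
    exp (-((n + 1 : ℝ) ^ 2) * a) ≤ ∫ x in (n : ℝ)..(n + 1 : ℕ), exp (-a * x ^ 2) := by
  have hconst : exp (-((n + 1 : ℝ) ^ 2) * a) = ∫ _ in (n : ℝ)..(n + 1 : ℕ),
      exp (-((n + 1 : ℝ) ^ 2) * a) := by simp
  rw [hconst]
  push_cast
  refine intervalIntegral.integral_mono_on (by linarith) intervalIntegrable_const
    ((by fun_prop : Continuous fun x : ℝ => exp (-a * x ^ 2)).intervalIntegrable _ _)
    fun x hx => ?_
  have hx0 : (0 : ℝ) ≤ x := (Nat.cast_nonneg n).trans hx.1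
  rw [exp_le_exp]
  nlinarith [mul_le_mul_of_nonneg_left (mul_self_le_mul_self hx0 hx.2) ha.le]

lemma sum_range_exp_neg_succ_sq_mul_le (ha : 0 < a) (N : ℕ) :
    ∑ n ∈ Finset.range N, exp (-((n + 1 : ℝ) ^ 2) * a) ≤ √(π / a) / 2 :=
  calc ∑ n ∈ Finset.range N, exp (-((n + 1 : ℝ) ^ 2) * a)
      ≤ ∑ n ∈ Finset.range N, ∫ x in (n : ℝ)..(n + 1 : ℕ), exp (-a * x ^ 2) :=
        Finset.sum_le_sum fun n _ => exp_neg_succ_sq_mul_le_integral ha n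
    _ = ∫ x in (0 : ℕ)..(N : ℝ), exp (-a * x ^ 2) :=
        intervalIntegral.sum_integral_adjacent_intervals fun _ _ =>
          (by fun_prop : Continuous fun x : ℝ => exp (-a * x ^ 2)).intervalIntegrable _ _
    _ ≤ ∫ x in Ioi 0, exp (-a * x ^ 2) := by
        rw [Nat.cast_zero, intervalIntegral.integral_of_le N.cast_nonneg]
        exact setIntegral_mono_set (integrable_exp_neg_mul_sq ha).integrableOn
          (.of_forall fun x => (exp_pos _).le) (.of_forall Ioc_subset_Ioi_self)
    _ = √(π / a) / 2 := integral_gaussian_Ioi a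

lemma summable_exp_neg_succ_sq_mul (ha : 0 < a) :
    Summable fun n : ℕ => exp (-((n + 1 : ℝ) ^ 2) * a) :=
  summable_of_sum_range_le (fun _ => (exp_pos _).le) (sum_range_exp_neg_succ_sq_mul_le ha)

lemma tsum_exp_neg_succ_sq_mul_le (ha : 0 < a) :
    ∑' n : ℕ, exp (-((n + 1 : ℝ) ^ 2) * a) ≤ √(π / a) / 2 :=
  (summable_exp_neg_succ_sq_mul ha).tsum_le_of_sum_range_le (sum_range_exp_neg_succ_sq_mul_le ha)

end GaussianSum

section HeatGreen

lemma abs_heatGreen_term_le (t x y : ℝ) (n : ℕ) :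
    |sin ((n + 1 : ℝ) * π * x) * sin ((n + 1 : ℝ) * π * y) * exp (-((n + 1 : ℝ) ^ 2) * π ^ 2 * t)|
      ≤ exp (-((n + 1 : ℝ) ^ 2) * (π ^ 2 * t)) := by
  rw [abs_mul, abs_mul, abs_exp, ← mul_assoc]
  calc _ ≤ 1 * 1 * exp (-((n + 1 : ℝ) ^ 2) * π ^ 2 * t) := by
        gcongr <;> exact abs_sin_le_one _
    _ = _ := by ring

lemma abs_heatGreen_le {t : ℝ} (ht : 0 < t) (x y : ℝ) : |heatGreen t x y| ≤ (√t)⁻¹ := by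
  have ha : 0 < π ^ 2 * t := by positivity
  have hsum : |∑' n : ℕ, sin ((n + 1 : ℝ) * π * x) * sin ((n + 1 : ℝ) * π * y) *
      exp (-((n + 1 : ℝ) ^ 2) * π ^ 2 * t)| ≤ √(π / (π ^ 2 * t)) / 2 := by
    have hs := summable_exp_neg_succ_sq_mul ha
    rw [← Real.norm_eq_abs]
    exact (tsum_of_norm_bounded hs.hasSum (abs_heatGreen_term_le t x y)).trans
      (tsum_exp_neg_succ_sq_mul_le ha)
  calc |heatGreen t x y| ≤ √(π / (π ^ 2 * t)) := by
        rw [heatGreen, abs_mul, abs_two]; linarith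
    _ ≤ √t⁻¹ := by
        gcongr
        rw [div_le_iff₀ ha, inv_mul_eq_div, mul_div_assoc, div_self ht.ne', mul_one]
        nlinarith [pi_gt_three]
    _ = (√t)⁻¹ := sqrt_inv t

lemma continuousAt_heatGreen {p : ℝ × ℝ × ℝ} (hp : 0 < p.1) :
    ContinuousAt (fun q : ℝ × ℝ × ℝ => heatGreen q.1 q.2.1 q.2.2) p := by
  have hU : IsOpen {q : ℝ × ℝ × ℝ | p.1 / 2 < q.1} := isOpen_lt continuous_const continuous_fst
  have hsum := continuousOn_tsum (s := {q : ℝ × ℝ × ℝ | p.1 / 2 < q.1})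
    (f := fun (n : ℕ) (q : ℝ × ℝ × ℝ) => sin ((n + 1 : ℝ) * π * q.2.1) *
      sin ((n + 1 : ℝ) * π * q.2.2) * exp (-((n + 1 : ℝ) ^ 2) * π ^ 2 * q.1))
    (fun n => by fun_prop) (summable_exp_neg_succ_sq_mul (a := π ^ 2 * (p.1 / 2)) (by positivity))
    fun n q hq => (abs_heatGreen_term_le _ _ _ n).trans <| exp_le_exp.2 <| by
      have : p.1 / 2 ≤ q.1 := le_of_lt hq
      have : 0 ≤ ((n + 1 : ℝ) ^ 2) * π ^ 2 := by positivity
      nlinarith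
  exact (hsum.const_smul (2 : ℝ)).continuousAt (hU.mem_nhds (show p.1 / 2 < p.1 by linarith))

lemma continuous_heatGreen {t : ℝ} (ht : 0 < t) (x : ℝ) : Continuous (heatGreen t x) :=
  continuous_iff_continuousAt.2 fun y =>
    (continuousAt_heatGreen (p := (t, x, y)) ht).comp (f := fun y : ℝ => (t, x, y))
      (by fun_prop)

end HeatGreen

section SingularKernel

lemma inv_sqrt_eq_rpow {r : ℝ} (hr : 0 ≤ r) : (√r)⁻¹ = r ^ ((1 / 2 : ℝ) - 1) := by
  rw [sqrt_eq_rpow, ← rpow_neg hr]; norm_num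

lemma intervalIntegrable_inv_sqrt_sub {t : ℝ} (ht : 0 ≤ t) :
    IntervalIntegrable (fun s => (√(t - s))⁻¹) volume 0 t := by
  have h := ((intervalIntegral.intervalIntegrable_rpow' (r := (1 / 2 : ℝ) - 1)
    (by norm_num)).comp_sub_left t (a := 0) (b := t)).symm
  rw [sub_zero, sub_self] at h
  refine h.congr fun s hs => ?_
  rw [uIoc_of_le ht] at hs
  exact (inv_sqrt_eq_rpow (sub_nonneg.2 hs.2)).symm

lemma integral_inv_sqrt_sub_mul_exp_le {t c : ℝ} (ht : 0 ≤ t) (hc : 0 < c) :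
    ∫ s in 0..t, (√(t - s))⁻¹ * exp (c * s) ≤ exp (c * t) * √(π / c) := by
  have hGamma : ∫ r in Ioi 0, r ^ ((1 / 2 : ℝ) - 1) * exp (-(c * r)) = √(π / c) := by
    rw [integral_rpow_mul_exp_neg_mul_Ioi one_half_pos hc, Gamma_one_half_eq, ← sqrt_eq_rpow,
      ← sqrt_mul (by positivity), one_div_mul_eq_div]
  have hint : IntegrableOn (fun r => r ^ ((1 / 2 : ℝ) - 1) * exp (-(c * r))) (Ioi 0) :=
    Integrable.of_integral_ne_zero (by rw [hGamma]; positivity)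
  calc ∫ s in 0..t, (√(t - s))⁻¹ * exp (c * s)
      = ∫ s in 0..t, exp (c * t) * ((√(t - s))⁻¹ * exp (-(c * (t - s)))) := by
        congr 1; ext s
        rw [mul_left_comm, ← exp_add]; ring_nf
    _ = exp (c * t) * ∫ r in Ioc 0 t, r ^ ((1 / 2 : ℝ) - 1) * exp (-(c * r)) := by
        rw [intervalIntegral.integral_comp_sub_left
            (fun r => exp (c * t) * ((√r)⁻¹ * exp (-(c * r)))), sub_self, sub_zero,
          intervalIntegral.integral_const_mul, intervalIntegral.integral_of_le ht]
        congr 1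
        exact setIntegral_congr_fun measurableSet_Ioc fun r hr => by rw [inv_sqrt_eq_rpow hr.1.le]
    _ ≤ exp (c * t) * ∫ r in Ioi 0, r ^ ((1 / 2 : ℝ) - 1) * exp (-(c * r)) := by
        refine mul_le_mul_of_nonneg_left (setIntegral_mono_set hint ?_
          (.of_forall Ioc_subset_Ioi_self)) (exp_pos _).le
        exact (ae_restrict_mem measurableSet_Ioi).mono fun r (hr : 0 < r) => by positivity
    _ = exp (c * t) * √(π / c) := by rw [hGamma]

end SingularKernel

section HeatPotential

lemma intervalIntegrable_heatGreen_mul {r : ℝ} (hr : 0 < r) (x : ℝ) {g : ℝ → ℝ}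
    (hg : ContinuousOn g (Icc 0 1)) :
    IntervalIntegrable (fun y => heatGreen r x y * g y) volume 0 1 := by
  refine ContinuousOn.intervalIntegrable ?_
  rw [uIcc_of_le zero_le_one]
  exact (continuous_heatGreen hr x).continuousOn.mul hg

lemma abs_integral_heatGreen_mul_le {r c : ℝ} (hr : 0 < r) (x : ℝ) {g : ℝ → ℝ}
    (hg : ∀ y ∈ Icc (0 : ℝ) 1, |g y| ≤ c) :
    |∫ y in 0..1, heatGreen r x y * g y| ≤ (√r)⁻¹ * c := by
  have h := intervalIntegral.norm_integral_le_of_norm_le_const (a := 0) (b := 1)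
    (f := fun y => heatGreen r x y * g y) (C := (√r)⁻¹ * c) fun y hy => by
      rw [uIoc_of_le zero_le_one] at hy
      rw [Real.norm_eq_abs, abs_mul]
      exact mul_le_mul (abs_heatGreen_le hr x y) (hg y (Ioc_subset_Icc_self hy)) (abs_nonneg _)
        (by positivity)
  simpa using h

lemma intervalIntegrable_heatPotential {t : ℝ} (ht : 0 < t) (x : ℝ) {g : ℝ → ℝ → ℝ}
    (hg : ContinuousOn (uncurry g) (Icc 0 t ×ˢ Icc 0 1)) :
    IntervalIntegrable (fun s => ∫ y in 0..1, heatGreen (t - s) x y * g s y) volume 0 t := by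
  obtain ⟨c, hc⟩ := (isCompact_Icc.prod isCompact_Icc).exists_bound_of_continuousOn hg
  -- `heatGreen 0` is a divergent series (junk value), so stay on the open interval `s < t`.
  have hk : ContinuousOn (fun p : ℝ × ℝ => heatGreen (t - p.1) x p.2 * g p.1 p.2)
      (Ioo 0 t ×ˢ Ioc 0 1) := by
    refine ContinuousOn.mul (fun p hp => ?_)
      (hg.mono (prod_mono Ioo_subset_Icc_self Ioc_subset_Icc_self))
    exact ((continuousAt_heatGreen (p := (t - p.1, x, p.2)) (sub_pos.2 hp.1.2)).comp
      (f := fun p : ℝ × ℝ => (t - p.1, x, p.2)) (by fun_prop)).continuousWithinAt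
  have hmeas : AEStronglyMeasurable (fun s => ∫ y in 0..1, heatGreen (t - s) x y * g s y)
      (volume.restrict (Ioo 0 t)) := by
    simp_rw [intervalIntegral.integral_of_le zero_le_one]
    refine AEStronglyMeasurable.integral_prod_right'
      (f := fun p : ℝ × ℝ => heatGreen (t - p.1) x p.2 * g p.1 p.2) ?_
    rw [Measure.prod_restrict, ← Measure.volume_eq_prod]
    exact hk.aestronglyMeasurable (measurableSet_Ioo.prod measurableSet_Ioc)
  rw [intervalIntegrable_iff_integrableOn_Ioo_of_le ht.le]
  have hbound : IntegrableOn (fun s => (√(t - s))⁻¹ * c) (Ioo 0 t) :=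
    ((intervalIntegrable_inv_sqrt_sub ht.le).mul_const c).1.mono_set Ioo_subset_Ioc_self
  refine hbound.mono' hmeas ((ae_restrict_mem measurableSet_Ioo).mono fun s hs => ?_)
  exact abs_integral_heatGreen_mul_le (sub_pos.2 hs.2) x fun y hy =>
    hc (s, y) ⟨Ioo_subset_Icc_self hs, hy⟩

end HeatPotential

section MildSolution

variable {T : ℝ} {L : NNReal} {u₀ b : ℝ → ℝ} {η₁ η₂ z₁ z₂ : ℝ → ℝ → ℝ}

lemma abs_sub_le_of_isMildSolution (hb : LipschitzWith L b)
    (hz₁c : ContinuousOn (uncurry z₁) (Icc 0 T ×ˢ Icc 0 1)) (hz₁ : IsMildSolution T u₀ b η₁ z₁)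
    (hz₂c : ContinuousOn (uncurry z₂) (Icc 0 T ×ˢ Icc 0 1)) (hz₂ : IsMildSolution T u₀ b η₂ z₂)
    {m : ℝ → ℝ} (hm : Continuous m)
    (hzm : ∀ s ∈ Icc 0 T, ∀ y ∈ Icc (0 : ℝ) 1, |z₁ s y - z₂ s y| ≤ m s)
    {t x : ℝ} (ht : t ∈ Ioc 0 T) (hx : x ∈ Icc (0 : ℝ) 1) :
    |z₁ t x - z₂ t x| ≤ |η₁ t x - η₂ t x| + L * ∫ s in 0..t, (√(t - s))⁻¹ * m s := by
  have hsub : Icc 0 t ×ˢ Icc (0 : ℝ) 1 ⊆ Icc 0 T ×ˢ Icc 0 1 :=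
    prod_mono (Icc_subset_Icc_right ht.2) subset_rfl
  have hF₁ := intervalIntegrable_heatPotential ht.1 x (g := fun s y => b (z₁ s y))
    (hb.continuous.comp_continuousOn (hz₁c.mono hsub))
  have hF₂ := intervalIntegrable_heatPotential ht.1 x (g := fun s y => b (z₂ s y))
    (hb.continuous.comp_continuousOn (hz₂c.mono hsub))
  have hslice : ∀ z : ℝ → ℝ → ℝ, ContinuousOn (uncurry z) (Icc 0 T ×ˢ Icc 0 1) →
      ∀ s ∈ Icc 0 T, ContinuousOn (fun y => b (z s y)) (Icc 0 1) := fun z hz s hs =>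
    hb.continuous.comp_continuousOn
      (hz.comp (f := fun y => (s, y)) (Continuous.continuousOn (by fun_prop)) fun y hy => ⟨hs, hy⟩)
  have hdiff : ∀ s ∈ Ioo 0 t,
      ‖(∫ y in 0..1, heatGreen (t - s) x y * b (z₁ s y)) -
        ∫ y in 0..1, heatGreen (t - s) x y * b (z₂ s y)‖ ≤ L * ((√(t - s))⁻¹ * m s) := by
    intro s hs
    have hsT : s ∈ Icc 0 T := ⟨hs.1.le, hs.2.le.trans ht.2⟩
    have hts : 0 < t - s := sub_pos.2 hs.2
    rw [← intervalIntegral.integral_sub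
      (intervalIntegrable_heatGreen_mul hts x (hslice z₁ hz₁c s hsT))
      (intervalIntegrable_heatGreen_mul hts x (hslice z₂ hz₂c s hsT))]
    simp_rw [← mul_sub]
    refine (abs_integral_heatGreen_mul_le (c := L * m s) hts x fun y hy => ?_).trans_eq (by ring)
    calc |b (z₁ s y) - b (z₂ s y)| ≤ L * |z₁ s y - z₂ s y| := by
          simpa only [Real.dist_eq] using hb.dist_le_mul _ _
      _ ≤ L * m s := by gcongr; exact hzm s hsT y hy
  have hI := intervalIntegral.norm_integral_le_of_norm_le ht.1.le
    (by filter_upwards [volume.ae_ne t] with s hst hs using hdiff s ⟨hs.1, lt_of_le_of_ne hs.2 hst⟩)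
    (((intervalIntegrable_inv_sqrt_sub ht.1.le).mul_continuousOn hm.continuousOn).const_mul L)
  rw [intervalIntegral.integral_sub hF₁ hF₂, intervalIntegral.integral_const_mul,
    Real.norm_eq_abs] at hI
  rw [hz₁ t ht x hx, hz₂ t ht x hx]
  calc _ = |((∫ s in 0..t, ∫ y in 0..1, heatGreen (t - s) x y * b (z₁ s y)) -
        ∫ s in 0..t, ∫ y in 0..1, heatGreen (t - s) x y * b (z₂ s y)) + (η₁ t x - η₂ t x)| := by
        ring_nf
    _ ≤ _ := (abs_add_le _ _).trans (by linarith)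

end MildSolution

section SingularGronwall

lemma ContinuousOn.le_of_le_on_Ioc_prod {α : Type*} [TopologicalSpace α] {a b c : ℝ} (hab : a ≠ b)
    {S : Set α} {g : ℝ × α → ℝ} (hg : ContinuousOn g (Icc a b ×ˢ S))
    (h : ∀ p ∈ Ioc a b ×ˢ S, g p ≤ c) : ∀ p ∈ Icc a b ×ˢ S, g p ≤ c := by
  intro p hp
  have hcl : Icc a b ×ˢ S ⊆ closure (Ioc a b ×ˢ S) := by
    rw [closure_prod_eq, closure_Ioc hab]
    exact prod_mono subset_rfl subset_closure
  exact ContinuousWithinAt.closure_le (hcl hp)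
    ((hg p hp).mono (prod_mono Ioc_subset_Icc_self subset_rfl)) continuousWithinAt_const h

lemma exists_pos_mul_sqrt_pi_div_le_half (q : ℝ) : ∃ c > 0, q * √(π / c) ≤ 1 / 2 := by
  refine ⟨4 * π * q ^ 2 + 1, by positivity, ?_⟩
  rcases le_or_gt q 0 with hq | hq
  · nlinarith [sqrt_nonneg (π / (4 * π * q ^ 2 + 1))]
  calc q * √(π / (4 * π * q ^ 2 + 1)) = √(q ^ 2 * (π / (4 * π * q ^ 2 + 1))) := by
        rw [sqrt_mul (sq_nonneg _), sqrt_sq hq.le]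
    _ ≤ √((1 / 2) ^ 2) := by
        gcongr
        rw [mul_div_assoc', div_le_iff₀ (by positivity)]
        nlinarith [pi_pos]
    _ = 1 / 2 := sqrt_sq (by norm_num)

lemma abs_le_of_singular_gronwall {T N q c : ℝ} (hT : 0 < T) (hN : 0 ≤ N) (hq : 0 ≤ q)
    (hc : 0 < c) (hqc : q * √(π / c) ≤ 1 / 2) {S : Set ℝ} (hS : IsCompact S)
    {f : ℝ → ℝ → ℝ} (hf : ContinuousOn (uncurry f) (Icc 0 T ×ˢ S))
    (hvolterra : ∀ m : ℝ → ℝ, Continuous m → (∀ s ∈ Icc 0 T, ∀ y ∈ S, |f s y| ≤ m s) →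
      ∀ t ∈ Ioc 0 T, ∀ x ∈ S, |f t x| ≤ N + q * ∫ s in 0..t, (√(t - s))⁻¹ * m s) :
    ∀ t ∈ Icc 0 T, ∀ x ∈ S, |f t x| ≤ 2 * exp (c * T) * N := by
  set K := Icc 0 T ×ˢ S
  have hw : ContinuousOn (fun p : ℝ × ℝ => exp (-(c * p.1)) * |f p.1 p.2|) K :=
    (Continuous.continuousOn (by fun_prop)).mul hf.abs
  set M := sSup ((fun p : ℝ × ℝ => exp (-(c * p.1)) * |f p.1 p.2|) '' K)
  have hM0 : 0 ≤ M := Real.sSup_nonneg (by rintro _ ⟨p, -, rfl⟩; positivity)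
  have hfM : ∀ s ∈ Icc 0 T, ∀ y ∈ S, |f s y| ≤ M * exp (c * s) := fun s hs y hy => by
    have h := le_csSup ((isCompact_Icc.prod hS).bddAbove_image hw)
      (mem_image_of_mem _ (⟨hs, hy⟩ : (s, y) ∈ K))
    rwa [exp_neg, inv_mul_le_iff₀ (exp_pos _), mul_comm] at h
  have hstep : ∀ p ∈ Ioc 0 T ×ˢ S, exp (-(c * p.1)) * |f p.1 p.2| ≤ N + M / 2 := by
    rintro ⟨t, x⟩ ⟨ht, hx⟩
    have hI : ∫ s in 0..t, (√(t - s))⁻¹ * (M * exp (c * s)) ≤ M * (exp (c * t) * √(π / c)) := by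
      simp_rw [mul_left_comm _ M]
      rw [intervalIntegral.integral_const_mul]
      exact mul_le_mul_of_nonneg_left (integral_inv_sqrt_sub_mul_exp_le ht.1.le hc) hM0
    have h : |f t x| ≤ N + q * (M * (exp (c * t) * √(π / c))) :=
      (hvolterra _ (by fun_prop) hfM t ht x hx).trans (by gcongr)
    calc exp (-(c * t)) * |f t x| ≤ exp (-(c * t)) * (N + q * (M * (exp (c * t) * √(π / c)))) :=
          mul_le_mul_of_nonneg_left h (exp_pos _).le
      _ = exp (-(c * t)) * N + q * √(π / c) * M := by
          rw [mul_add, exp_neg]; field_simp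
      _ ≤ 1 * N + 1 / 2 * M := by
          gcongr
          · exact exp_le_one_iff.2 (by nlinarith [ht.1])
      _ = N + M / 2 := by ring
  have hMN : M ≤ N + M / 2 := Real.sSup_le (by
      rintro _ ⟨p, hp, rfl⟩
      exact hw.le_of_le_on_Ioc_prod hT.ne hstep p hp) (by positivity)
  intro t ht x hx
  calc |f t x| ≤ M * exp (c * t) := hfM t ht x hx
    _ ≤ 2 * N * exp (c * T) := by
        gcongr
        · linarith
        · exact ht.2
    _ = 2 * exp (c * T) * N := by ring

end SingularGronwall

/-- Lipschitz continuity of the solution map `ψ : η ↦ z_η`: there is a constant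
`A > 0`, depending only on `T` and the Lipschitz constant `L` of `b`, such that
any two continuous solutions `z₁, z₂` corresponding to perturbations `η₁, η₂`
satisfy `sup |z₁ − z₂| ≤ A · sup |η₁ − η₂|` on `[0,T]×[0,1]`. -/
theorem solution_map_lipschitz (T : ℝ) (hT : 0 < T) (L : NNReal) :
    ∃ A : ℝ, 0 < A ∧
      ∀ u₀ : ℝ → ℝ, ContinuousOn u₀ (Set.Icc (0 : ℝ) 1) →
      ∀ b : ℝ → ℝ, LipschitzWith L b →
      ∀ η₁ η₂ z₁ z₂ : ℝ → ℝ → ℝ,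
        ContinuousOn (fun p : ℝ × ℝ => η₁ p.1 p.2) (Set.Icc (0 : ℝ) T ×ˢ Set.Icc (0 : ℝ) 1) →
        ContinuousOn (fun p : ℝ × ℝ => η₂ p.1 p.2) (Set.Icc (0 : ℝ) T ×ˢ Set.Icc (0 : ℝ) 1) →
        ContinuousOn (fun p : ℝ × ℝ => z₁ p.1 p.2) (Set.Icc (0 : ℝ) T ×ˢ Set.Icc (0 : ℝ) 1) →
        IsMildSolution T u₀ b η₁ z₁ →
        ContinuousOn (fun p : ℝ × ℝ => z₂ p.1 p.2) (Set.Icc (0 : ℝ) T ×ˢ Set.Icc (0 : ℝ) 1) →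
        IsMildSolution T u₀ b η₂ z₂ →
        ∀ t ∈ Set.Icc (0 : ℝ) T, ∀ x ∈ Set.Icc (0 : ℝ) 1,
          |z₁ t x - z₂ t x| ≤ A * sSup ((fun p : ℝ × ℝ => |η₁ p.1 p.2 - η₂ p.1 p.2|) ''
            (Set.Icc (0 : ℝ) T ×ˢ Set.Icc (0 : ℝ) 1)) := by
  obtain ⟨c, hc, hLc⟩ := exists_pos_mul_sqrt_pi_div_le_half L
  refine ⟨2 * exp (c * T), by positivity,
    fun u₀ _ b hb η₁ η₂ z₁ z₂ hη₁ hη₂ hz₁c hz₁ hz₂c hz₂ => ?_⟩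
  have hη : ∀ p ∈ Icc (0 : ℝ) T ×ˢ Icc (0 : ℝ) 1, |η₁ p.1 p.2 - η₂ p.1 p.2| ≤
      sSup ((fun p : ℝ × ℝ => |η₁ p.1 p.2 - η₂ p.1 p.2|) '' (Icc (0 : ℝ) T ×ˢ Icc (0 : ℝ) 1)) :=
    fun p hp => le_csSup ((isCompact_Icc.prod isCompact_Icc).bddAbove_image (hη₁.sub hη₂).abs)
      (mem_image_of_mem _ hp)
  refine abs_le_of_singular_gronwall hT (Real.sSup_nonneg (by rintro _ ⟨p, -, rfl⟩; positivity))
    L.coe_nonneg hc hLc isCompact_Icc (f := fun s y => z₁ s y - z₂ s y) (hz₁c.sub hz₂c)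
    fun m hm hzm t ht x hx => ?_
  exact (abs_sub_le_of_isMildSolution hb hz₁c hz₁ hz₂c hz₂ hm hzm ht hx).trans
    (by gcongr; exact hη (t, x) ⟨Ioc_subset_Icc_self ht, hx⟩)
end
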